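/- ∫_{-1}^{1} ∫_{-1}^{1} (4 · arctan(e^x) · arctan(e^y)) / (π² (1 + x²y²)) dx dy = G, where G is Catalan's constant. -/

import Mathlib

/-!
Since `arctan (exp x) + arctan (exp (-x)) = π / 2` and the kernel `(1 + x²y²)⁻¹` is even in
each variable, reflecting `x ↦ -x` and averaging replaces the factor `arctan (exp x)` by `π / 4`
in each variable, so the double integral collapses to
`∫₀¹ ∫₀¹ (1 + x²y²)⁻¹ dx dy = ∫₀¹ arctan y / y dy`. Integrating the arctangent series termwise,
which is legitimate because `∑ ∫₀¹ y²ⁿ / (2n + 1) dy = ∑ 1 / (2n + 1)²` converges, gives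
Catalan's constant.
-/

open Real intervalIntegral MeasureTheory Set

theorem intervalIntegral.integral_mul_of_add_comp_neg_eq {F k : ℝ → ℝ} {a c : ℝ}
    (hF : ∀ x, F x + F (-x) = c) (hk : ∀ x, k (-x) = k x)
    (hFk : IntervalIntegrable (fun x => F x * k x) volume (-a) a) :
    ∫ x in -a..a, F x * k x = c / 2 * ∫ x in -a..a, k x := by
  have hFk' : IntervalIntegrable (fun x => F (-x) * k x) volume (-a) a := by
    simpa [hk] using (IntervalIntegrable.iff_comp_neg).mp hFk.symm
  have hreflect : ∫ x in -a..a, F (-x) * k x = ∫ x in -a..a, F x * k x := by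
    simpa [hk] using integral_comp_neg (fun x => F x * k x) (a := -a) (b := a)
  have hsum : ∫ x in -a..a, (F x * k x + F (-x) * k x) = c * ∫ x in -a..a, k x := by
    rw [← integral_const_mul]
    exact integral_congr fun x _ => by rw [← add_mul, hF]
  rw [integral_add hFk hFk', hreflect] at hsum
  linarith

theorem intervalIntegral.integral_of_even {k : ℝ → ℝ} {a : ℝ} (hk : ∀ x, k (-x) = k x)
    (hint : IntervalIntegrable k volume (-a) a) :
    ∫ x in -a..a, k x = 2 * ∫ x in 0..a, k x := by
  have hreflect : ∫ x in -a..0, k x = ∫ x in 0..a, k x := by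
    simpa [hk] using (integral_comp_neg k (a := 0) (b := a)).symm
  have hzero : (0 : ℝ) ∈ uIcc (-a) a := by
    rcases le_total 0 a with h | h <;> simp [h]
  rw [← integral_add_adjacent_intervals (hint.mono_set (uIcc_subset_uIcc_left hzero))
    (hint.mono_set (uIcc_subset_uIcc_right hzero)), hreflect]
  ring

theorem intervalIntegral.integral_eq_setIntegral_Ioo {E : Type*} [NormedAddCommGroup E]
    [NormedSpace ℝ E] {f : ℝ → E} {a b : ℝ} (hab : a ≤ b) :
    ∫ x in a..b, f x = ∫ x in Ioo a b, f x := by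
  rw [integral_of_le hab, integral_Ioc_eq_integral_Ioo]

section EvenKernel

variable {k : ℝ → ℝ → ℝ} {a : ℝ}

theorem intervalIntegral.integral_integral_mul_mul_of_add_comp_neg_eq {F : ℝ → ℝ} {c : ℝ}
    (hF : ∀ x, F x + F (-x) = c) (hFc : Continuous F) (hk : Continuous k.uncurry)
    (hkx : ∀ y x, k y (-x) = k y x) (hky : ∀ y x, k (-y) x = k y x) :
    ∫ y in -a..a, ∫ x in -a..a, F x * F y * k y x
      = (c / 2) ^ 2 * ∫ y in -a..a, ∫ x in -a..a, k y x := by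
  have hK : Continuous fun y => ∫ x in -a..a, k y x :=
    continuous_parametric_intervalIntegral_of_continuous' hk _ _
  have hinner : ∀ y, ∫ x in -a..a, F x * F y * k y x = F y * (c / 2 * ∫ x in -a..a, k y x) :=
    fun y => by
      rw [← integral_mul_of_add_comp_neg_eq hF (hkx y)
        ((hFc.mul (hk.comp (Continuous.prodMk_right y))).intervalIntegrable _ _),
        ← integral_const_mul]
      exact integral_congr fun x _ => by ring
  rw [integral_congr fun y _ => hinner y, integral_mul_of_add_comp_neg_eq hF
    (fun y => by simp only [hky]) ((hFc.mul (hK.const_mul _)).intervalIntegrable _ _),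
    integral_const_mul]
  ring

theorem intervalIntegral.integral_integral_of_even (hk : Continuous k.uncurry)
    (hkx : ∀ y x, k y (-x) = k y x) (hky : ∀ y x, k (-y) x = k y x) :
    ∫ y in -a..a, ∫ x in -a..a, k y x = 4 * ∫ y in 0..a, ∫ x in 0..a, k y x := by
  have hK : Continuous fun y => ∫ x in 0..a, k y x :=
    continuous_parametric_intervalIntegral_of_continuous' hk _ _
  rw [integral_congr fun y _ => integral_of_even (hkx y)
      ((hk.comp (Continuous.prodMk_right y)).intervalIntegrable _ _),
    integral_of_even (fun y => by simp only [hky]) ((hK.const_mul _).intervalIntegrable _ _),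
    integral_const_mul]
  ring

end EvenKernel

theorem arctan_exp_add_arctan_exp_neg (x : ℝ) : arctan (exp x) + arctan (exp (-x)) = π / 2 := by
  rw [exp_neg, arctan_inv_of_pos (exp_pos x)]
  ring

theorem integral_inv_one_add_sq_mul_sq {y : ℝ} (hy : y ≠ 0) (a b : ℝ) :
    ∫ x in a..b, (1 + x ^ 2 * y ^ 2)⁻¹ = (arctan (b * y) - arctan (a * y)) / y := by
  have := integral_comp_mul_right (fun x => (1 + x ^ 2)⁻¹) hy (a := a) (b := b)
  simp only [mul_pow, integral_inv_one_add_sq, smul_eq_mul] at this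
  rw [this]
  ring

theorem summable_one_div_two_mul_add_one_sq :
    Summable fun n : ℕ => 1 / (2 * (n : ℝ) + 1) ^ 2 := by
  have hinj : Function.Injective fun n : ℕ => 2 * n + 1 := fun m n h => by simpa using h
  simpa [Function.comp_def] using (Real.summable_one_div_nat_pow.mpr one_lt_two).comp_injective hinj

theorem hasSum_arctan_div_self {y : ℝ} (hy : |y| < 1) (hy0 : y ≠ 0) :
    HasSum (fun n : ℕ => (-1) ^ n * y ^ (2 * n) / (2 * n + 1)) (arctan y / y) := by
  refine ((Real.hasSum_arctan hy).div_const y).congr_fun fun n => ?_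
  push_cast
  field_simp
  ring

theorem integral_arctan_div_self :
    ∫ y in (0 : ℝ)..1, arctan y / y = ∑' n : ℕ, (-1 : ℝ) ^ n / (2 * n + 1) ^ 2 := by
  set F : ℕ → ℝ → ℝ := fun n y => (-1) ^ n * y ^ (2 * n) / (2 * n + 1)
  have hF : ∀ n, Continuous (F n) := fun n => by fun_prop
  have hint : ∀ n : ℕ, ∫ y in (0 : ℝ)..1, F n y = (-1) ^ n / (2 * n + 1) ^ 2 := fun n => by
    simp only [F, intervalIntegral.integral_div, intervalIntegral.integral_const_mul, integral_pow]
    push_cast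
    field_simp
    ring
  have hnorm : ∀ n : ℕ, ∫ y in (0 : ℝ)..1, ‖F n y‖ = 1 / (2 * n + 1) ^ 2 := fun n => by
    have habs : ∀ y, ‖F n y‖ = y ^ (2 * n) / (2 * n + 1) := fun y => by
      rw [norm_div, norm_mul, norm_pow, norm_pow, norm_neg, norm_one, one_pow, one_mul, pow_mul,
        Real.norm_eq_abs, sq_abs, ← pow_mul, Real.norm_of_nonneg (by positivity)]
    simp only [habs, intervalIntegral.integral_div, integral_pow]
    push_cast
    field_simp
    ring
  calc ∫ y in (0 : ℝ)..1, arctan y / y = ∫ y in Ioo 0 1, ∑' n, F n y := by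
        rw [integral_eq_setIntegral_Ioo zero_le_one]
        refine setIntegral_congr_fun measurableSet_Ioo fun y hy => ?_
        have hy' : |y| < 1 := abs_lt.mpr ⟨by linarith [hy.1], hy.2⟩
        exact (hasSum_arctan_div_self hy' hy.1.ne').tsum_eq.symm
    _ = ∑' n, ∫ y in Ioo 0 1, F n y := by
        refine (integral_tsum_of_summable_integral_norm
          (fun n => (hF n).integrableOn_Icc.mono_set Ioo_subset_Icc_self) ?_).symm
        simpa only [← integral_eq_setIntegral_Ioo zero_le_one, hnorm]
          using summable_one_div_two_mul_add_one_sq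
    _ = _ := tsum_congr fun n => by rw [← integral_eq_setIntegral_Ioo zero_le_one, hint]

theorem integral_integral_inv_one_add_sq_mul_sq :
    ∫ y in (0 : ℝ)..1, ∫ x in (0 : ℝ)..1, (1 + x ^ 2 * y ^ 2)⁻¹
      = ∑' n : ℕ, (-1 : ℝ) ^ n / (2 * n + 1) ^ 2 := by
  rw [← integral_arctan_div_self]
  refine integral_congr_ae (Filter.Eventually.of_forall fun y hy => ?_)
  rw [uIoc_of_le zero_le_one] at hy
  rw [integral_inv_one_add_sq_mul_sq hy.1.ne']
  simp

theorem catalan_hyperbolic_secant :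
    ∫ y in (-1:ℝ)..1, ∫ x in (-1:ℝ)..1,
        4 * Real.arctan (Real.exp x) * Real.arctan (Real.exp y) /
          (Real.pi^2 * (1 + x^2 * y^2))
      = ∑' n : ℕ, (-1 : ℝ)^n / (2 * n + 1)^2 := by
  set k : ℝ → ℝ → ℝ := fun y x => (1 + x ^ 2 * y ^ 2)⁻¹
  have hk : Continuous k.uncurry := Continuous.inv₀ (by fun_prop) fun p => by positivity
  have hkx : ∀ y x, k y (-x) = k y x := fun y x => by simp [k]
  have hky : ∀ y x, k (-y) x = k y x := fun y x => by simp [k]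
  calc _ = 4 / π ^ 2 * ∫ y in (-1 : ℝ)..1, ∫ x in (-1 : ℝ)..1,
        arctan (exp x) * arctan (exp y) * k y x := by
        rw [← intervalIntegral.integral_const_mul]
        refine integral_congr fun y _ => ?_
        rw [← intervalIntegral.integral_const_mul]
        exact integral_congr fun x _ => by simp only [k]; field_simp
    _ = ∫ y in (0 : ℝ)..1, ∫ x in (0 : ℝ)..1, k y x := by
        rw [integral_integral_mul_mul_of_add_comp_neg_eq arctan_exp_add_arctan_exp_neg
          (by fun_prop) hk hkx hky, integral_integral_of_even hk hkx hky]
        field_simp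
        ring
    _ = _ := integral_integral_inv_one_add_sq_mul_sq
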